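/- If a term M of the value-named λ-calculus (after closure conversion, so all functional values closed) contains at least one function definition, then M decomposes as D[let x = λy⁺.T in N] for some hoisting context D, simple function body T, and term N. -/

import Mathlib

/-!
Statement 12: If a term `M` of the value-named λ-calculus after closure
conversion (all functional values closed) contains a function definition,
then `M ≡ D[let x = λy⁺.T in N]` for some hoisting context `D`, simple
function body `T`, and term `N`.
-/

namespace CostLabelling

abbrev Var := ℕ
abbrev Label := ℕ

inductive Tm : Type where
  | var : Var → Tm
  | lam : List Var → Tm → Tm
  | app : Tm → List Tm → Tm
  | tup : List Tm → Tm
  | proj : ℕ → Tm → Tm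
  | letin : Var → Tm → Tm → Tm
  | pre : Label → Tm → Tm
  | post : Tm → Label → Tm

inductive IsValue : Tm → Prop where
  | var : ∀ x, IsValue (.var x)
  | lam : ∀ xs M, IsValue (.lam xs M)
  | tup : ∀ Vs, (∀ V ∈ Vs, IsValue V) → IsValue (.tup Vs)

mutual
def subst (V : Tm) (x : Var) : Tm → Tm
  | .var y => if y = x then V else .var y
  | .lam xs M => if x ∈ xs then .lam xs M else .lam xs (subst V x M)
  | .app M Ns => .app (subst V x M) (substList V x Ns)
  | .tup Ms => .tup (substList V x Ms)
  | .proj i M => .proj i (subst V x M)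
  | .letin y M N => .letin y (subst V x M) (if y = x then N else subst V x N)
  | .pre l M => .pre l (subst V x M)
  | .post M l => .post (subst V x M) l
def substList (V : Tm) (x : Var) : List Tm → List Tm
  | [] => []
  | M :: Ms => subst V x M :: substList V x Ms
end

mutual
def fv : Tm → List Var
  | .var x => [x]
  | .lam xs M => (fv M).filter (fun y => y ∉ xs)
  | .app M Ns => fv M ++ fvList Ns
  | .tup Ms => fvList Ms
  | .proj _ M => fv M
  | .letin y M N => fv M ++ (fv N).filter (fun z => z ≠ y)
  | .pre _ M => fv M
  | .post M _ => fv M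
def fvList : List Tm → List Var
  | [] => []
  | M :: Ms => fv M ++ fvList Ms
end

/-- `C` is not a function. -/
def NonFun (C : Tm) : Prop := ∀ ys B, C ≠ .lam ys B

/-- Restricted (simple) terms `T ::= @(x,x⁺) | let x = C in T | ℓ > T` with
`C ::= (x*) | πᵢ(x)` : terms containing no function definitions. -/
inductive Simple : Tm → Prop where
  | app : ∀ (x : Var) (ys : List Var), Simple (.app (.var x) (ys.map .var))
  | letTup : ∀ x (ys : List Var) T, Simple T →
      Simple (.letin x (.tup (ys.map .var)) T)
  | letProj : ∀ x i (y : Var) T, Simple T →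
      Simple (.letin x (.proj i (.var y)) T)
  | pre : ∀ l T, Simple T → Simple (.pre l T)

/-- Hoisting contexts
`D ::= [] | let x = C in D | let x = λy⁺.D in M | ℓ > D`. -/
inductive HCtx : Type where
  | hole : HCtx
  | letC : Var → Tm → HCtx → HCtx
  | letLam : Var → List Var → HCtx → Tm → HCtx
  | pre : Label → HCtx → HCtx

def hplug : HCtx → Tm → Tm
  | .hole, M => M
  | .letC x C D, M => .letin x C (hplug D M)
  | .letLam x ys D N, M => .letin x (.lam ys (hplug D M)) N
  | .pre l D, M => .pre l (hplug D M)

/-- The hoisting transformations `(h₁)`, `(h₂)`, `(h₃)`, applied under a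
hoisting context `D`. -/
inductive Hoist : Tm → Tm → Prop where
  | h1 : ∀ D x C y (zs : List Var) T M, Simple T → NonFun C →
      x ∉ fv (.lam zs T) →
      Hoist (hplug D (.letin x C (.letin y (.lam zs T) M)))
            (hplug D (.letin y (.lam zs T) (.letin x C M)))
  | h2 : ∀ D x (ws : List Var) y (zs : List Var) T M N, Simple T →
      (∀ w ∈ ws, w ∉ fv (.lam zs T)) →
      Hoist (hplug D (.letin x (.lam ws (.letin y (.lam zs T) M)) N))
            (hplug D (.letin y (.lam zs T) (.letin x (.lam ws M) N)))
  | h3 : ∀ D l y (zs : List Var) T M, Simple T →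
      Hoist (hplug D (.pre l (.letin y (.lam zs T) M)))
            (hplug D (.letin y (.lam zs T) (.pre l M)))

mutual
/-- Let-bindable terms of `λℓ_cc,vn` : as in `λℓ_cps,vn` but all functional
values are closed. -/
inductive CcC : Tm → Prop where
  | lam : ∀ xs M, CcTm M → fv (.lam xs M) = [] → CcC (.lam xs M)
  | tup : ∀ (xs : List Var), CcC (.tup (xs.map .var))
  | proj : ∀ i (y : Var), CcC (.proj i (.var y))

/-- Terms of `λℓ_cc,vn` : `M ::= @(x,x⁺) | let x = C in M | ℓ > M`. -/
inductive CcTm : Tm → Prop where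
  | app : ∀ (x : Var) (ys : List Var), ys ≠ [] →
      CcTm (.app (.var x) (ys.map .var))
  | letin : ∀ x C M, CcC C → CcTm M → CcTm (.letin x C M)
  | pre : ∀ l M, CcTm M → CcTm (.pre l M)
end

/-- `M` contains a function definition. -/
inductive HasFun : Tm → Prop where
  | here : ∀ x ys N M, HasFun (.letin x (.lam ys N) M)
  | letBody : ∀ x C M, HasFun M → HasFun (.letin x C M)
  | lamBody : ∀ x ys N M, HasFun N → HasFun (.letin x (.lam ys N) M)
  | pre : ∀ l M, HasFun M → HasFun (.pre l M)

theorem Simple.not_hasFun {T : Tm} (hT : Simple T) : ¬ HasFun T := by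
  induction hT with
  | app => nofun
  | letTup _ _ _ _ ih | letProj _ _ _ _ _ ih =>
    intro h
    cases h with | letBody _ _ _ h => exact ih h
  | pre _ _ _ ih => intro h; cases h with | pre _ _ h => exact ih h

def Decomposable (M : Tm) : Prop :=
  ∃ (D : HCtx) (x : Var) (ys : List Var) (T N : Tm),
    Simple T ∧ M = hplug D (.letin x (.lam ys T) N)

namespace Decomposable

theorem of_simple {T : Tm} (hT : Simple T) (x : Var) (ys : List Var) (N : Tm) :
    Decomposable (.letin x (.lam ys T) N) :=
  ⟨.hole, x, ys, T, N, hT, rfl⟩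

theorem letin {M : Tm} (h : Decomposable M) (x : Var) (C : Tm) :
    Decomposable (.letin x C M) := by
  obtain ⟨D, y, ys, T, N, hT, rfl⟩ := h
  exact ⟨.letC x C D, y, ys, T, N, hT, rfl⟩

theorem lamBody {M : Tm} (h : Decomposable M) (x : Var) (xs : List Var) (N : Tm) :
    Decomposable (.letin x (.lam xs M) N) := by
  obtain ⟨D, y, ys, T, N', hT, rfl⟩ := h
  exact ⟨.letLam x xs D N, y, ys, T, N', hT, rfl⟩

theorem pre {M : Tm} (h : Decomposable M) (l : Label) : Decomposable (.pre l M) := by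
  obtain ⟨D, y, ys, T, N, hT, rfl⟩ := h
  exact ⟨.pre l D, y, ys, T, N, hT, rfl⟩

end Decomposable

/-- The witness is the first function definition along the spine of `M`, descending into its
body for as long as that body still defines a function. -/
theorem CcTm.simple_or_decomposable : ∀ {M : Tm}, CcTm M → Simple M ∨ Decomposable M
  | _, .app x ys _ => .inl (.app x ys)
  | _, .letin x _ N (.lam ys B hB _) _ =>
    .inr <| hB.simple_or_decomposable.elim
      (fun hT => .of_simple hT x ys N) (fun h => h.lamBody x ys N)
  | _, .letin x _ M (.tup ys) hM =>
    hM.simple_or_decomposable.imp (.letTup x ys M) (·.letin x _)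
  | _, .letin x _ M (.proj i y) hM =>
    hM.simple_or_decomposable.imp (.letProj x i y M) (·.letin x _)
  | _, .pre l M hM => hM.simple_or_decomposable.imp (.pre l M) (·.pre l)

/-- A term of `λℓ_cc,vn` containing a function definition
decomposes as `D[let x = λy⁺.T in N]` with `T` simple. -/
theorem function_definition_decomposition
    (M : Tm) (hM : CcTm M) (hfun : HasFun M) :
    ∃ (D : HCtx) (x : Var) (ys : List Var) (T N : Tm),
      Simple T ∧ M = hplug D (.letin x (.lam ys T) N) :=
  hM.simple_or_decomposable.resolve_left fun hT => hT.not_hasFun hfun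

end CostLabelling
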